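/- arXiv:1801.09047 — 3 statements merged into one kernel-verified Lean document; each statement's English description precedes it below -/
import Mathlib

section
/- Suppose f: ℝ^d → ℝ^d satisfies ⟨x, f(x)⟩ ≤ μ|x|² + a for all x, with μ < 0 and a > 0. Then for any real numbers 0 ≤ β₁ ≤ β₂ and all x ∈ ℝ^d: |x - β₁ f(x)|² + 2β₁ a ≤ ((1 - μβ₁)/(1 - μβ₂)) · (|x - β₂ f(x)|² + 2β₂ a). -/
open scoped RealInnerProductSpace

theorem stmt_1 (d : ℕ) (f : EuclideanSpace ℝ (Fin d) → EuclideanSpace ℝ (Fin d))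
    (μ a : ℝ) (hμ : μ < 0) (ha : 0 < a)
    (hf : ∀ x, ⟪x, f x⟫ ≤ μ * ‖x‖ ^ 2 + a)
    (β₁ β₂ : ℝ) (hβ₁ : 0 ≤ β₁) (hβ₁₂ : β₁ ≤ β₂) :
    ∀ x, ‖x - β₁ • f x‖ ^ 2 + 2 * β₁ * a ≤
      ((1 - μ * β₁) / (1 - μ * β₂)) * (‖x - β₂ • f x‖ ^ 2 + 2 * β₂ * a) := by
  intro x
  have hβ₂ : 0 ≤ β₂ := hβ₁.trans hβ₁₂
  have hq : 0 < 1 - μ * β₂ := by nlinarith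
  have hB := hf x
  have h1 : ‖x - β₁ • f x‖ ^ 2 = ‖x‖^2 - 2 * β₁ * ⟪x, f x⟫ + β₁^2 * ‖f x‖^2 := by
    rw [norm_sub_sq_real, real_inner_smul_right, norm_smul]
    simp [abs_of_nonneg hβ₁]; ring
  have h2 : ‖x - β₂ • f x‖ ^ 2 = ‖x‖^2 - 2 * β₂ * ⟪x, f x⟫ + β₂^2 * ‖f x‖^2 := by
    rw [norm_sub_sq_real, real_inner_smul_right, norm_smul]
    simp [abs_of_nonneg hβ₂]; ring
  rw [div_mul_eq_mul_div, le_div_iff₀ hq, h1, h2]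
  nlinarith [sq_nonneg ‖f x‖, sq_nonneg ‖x‖,
    mul_nonneg (sub_nonneg.2 hβ₁₂) (sq_nonneg ‖f x‖),
    mul_nonneg (mul_nonneg hβ₁ hβ₂) (sq_nonneg ‖f x‖),
    mul_nonneg (sub_nonneg.2 hβ₁₂) (mul_nonneg (mul_nonneg hβ₁ hβ₂) (sq_nonneg ‖f x‖)),
    mul_le_mul_of_nonneg_left hB (sub_nonneg.2 hβ₁₂),
    mul_nonneg (sub_nonneg.2 hβ₁₂) (mul_nonneg (neg_nonneg.2 hμ.le) (sq_nonneg ‖x‖))]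
end

section
/- Suppose f: ℝ^d → ℝ^d satisfies the one-sided Lipschitz condition ⟨x - y, f(x) - f(y)⟩ ≤ K₂|x - y|² with K₂ < 0. Then for any 0 ≤ λ₁ ≤ λ₂ and all x, y ∈ ℝ^d: |x - y - λ₁(f(x) - f(y))| ≤ ((1 - K₂λ₁)/(1 - K₂λ₂)) · |x - y - λ₂(f(x) - f(y))|. -/
/-!
Put `u = x - y`, `v = f x - f y` and `g λ = u - λ • v`. Pairing `g λ` with `u` and using the
one-sided Lipschitz bound gives `(1 - K₂ λ) ‖u‖ ≤ ‖g λ‖`. For `λ₁ < λ₂` the vector `g λ₁` is a convex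
combination of `u` and `g λ₂`, so the triangle inequality and the previous bound at `λ₂` give the claim.
-/

open scoped RealInnerProductSpace

section

variable {E : Type*} [NormedAddCommGroup E] [InnerProductSpace ℝ E]

theorem mul_norm_le_norm_sub_smul {u v : E} {K l : ℝ} (huv : ⟪u, v⟫ ≤ K * ‖u‖ ^ 2)
    (hl : 0 ≤ l) : (1 - K * l) * ‖u‖ ≤ ‖u - l • v‖ := by
  rcases (norm_nonneg u).eq_or_lt with hu | hu
  · rw [← hu, mul_zero]
    exact norm_nonneg _
  have hinner : (1 - K * l) * ‖u‖ ^ 2 ≤ ⟪u, u - l • v⟫ := by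
    rw [inner_sub_right, real_inner_smul_right, real_inner_self_eq_norm_sq]
    nlinarith
  have hcs : ⟪u, u - l • v⟫ ≤ ‖u‖ * ‖u - l • v‖ := real_inner_le_norm _ _
  nlinarith

theorem mul_norm_sub_smul_le_mul_norm_sub_smul {u v : E} {K l₁ l₂ : ℝ}
    (huv : ⟪u, v⟫ ≤ K * ‖u‖ ^ 2) (hK : 0 ≤ 1 - K * l₂) (hl₁ : 0 ≤ l₁) (hl₁₂ : l₁ ≤ l₂) :
    (1 - K * l₂) * ‖u - l₁ • v‖ ≤ (1 - K * l₁) * ‖u - l₂ • v‖ := by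
  rcases hl₁₂.eq_or_lt with rfl | hlt
  · exact le_rfl
  have hl₂ : 0 < l₂ := hl₁.trans_lt hlt
  have hcomb : l₂ • (u - l₁ • v) = (l₂ - l₁) • u + l₁ • (u - l₂ • v) := by module
  have htri : l₂ * ‖u - l₁ • v‖ ≤ (l₂ - l₁) * ‖u‖ + l₁ * ‖u - l₂ • v‖ := by
    calc l₂ * ‖u - l₁ • v‖ = ‖(l₂ - l₁) • u + l₁ • (u - l₂ • v)‖ := by
          rw [← hcomb, norm_smul, Real.norm_of_nonneg hl₂.le]
      _ ≤ (l₂ - l₁) * ‖u‖ + l₁ * ‖u - l₂ • v‖ := by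
          refine (norm_add_le _ _).trans_eq ?_
          rw [norm_smul, norm_smul, Real.norm_of_nonneg (sub_nonneg.2 hl₁₂),
            Real.norm_of_nonneg hl₁]
  have hu := mul_norm_le_norm_sub_smul huv hl₂.le
  refine le_of_mul_le_mul_left ?_ hl₂
  nlinarith [mul_le_mul_of_nonneg_left htri hK, sub_nonneg.2 hl₁₂]

end

theorem stmt_2 (d : ℕ) (f : EuclideanSpace ℝ (Fin d) → EuclideanSpace ℝ (Fin d))
    (K₂ : ℝ) (hK₂ : K₂ < 0)
    (hf : ∀ x y, ⟪x - y, f x - f y⟫ ≤ K₂ * ‖x - y‖ ^ 2)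
    (l₁ l₂ : ℝ) (hl₁ : 0 ≤ l₁) (hl₁₂ : l₁ ≤ l₂) :
    ∀ x y, ‖x - y - l₁ • (f x - f y)‖ ≤
      ((1 - K₂ * l₁) / (1 - K₂ * l₂)) * ‖x - y - l₂ • (f x - f y)‖ := by
  intro x y
  have hden : 0 < 1 - K₂ * l₂ := by nlinarith
  rw [div_mul_eq_mul_div, le_div_iff₀ hden, mul_comm]
  exact mul_norm_sub_smul_le_mul_norm_sub_smul (hf x y) hden.le hl₁ hl₁₂
end

section
/- Define f: ℝ² → ℝ² by f(x₁,x₂) = (-x₁³ - 5x₁ + x₂ + 5, -x₂³ - x₁ - 5x₂ + 5) and g: ℝ² → ℝ² by g(x₁,x₂) = (x₁ - x₂ + 3, -x₁ - x₂ + 3). Then for all x, y ∈ ℝ²: 2⟨x - y, f(x) - f(y)⟩ + |g(x) - g(y)|² ≤ -6|x - y|². -/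
open scoped RealInnerProductSpace

theorem stmt_9 (f g : EuclideanSpace ℝ (Fin 2) → EuclideanSpace ℝ (Fin 2))
    (hf : ∀ x, f x 0 = -(x 0) ^ 3 - 5 * x 0 + x 1 + 5 ∧
               f x 1 = -(x 1) ^ 3 - x 0 - 5 * x 1 + 5)
    (hg : ∀ x, g x 0 = x 0 - x 1 + 3 ∧ g x 1 = -(x 0) - x 1 + 3) :
    ∀ x y, 2 * ⟪x - y, f x - f y⟫ + ‖g x - g y‖ ^ 2 ≤ -6 * ‖x - y‖ ^ 2 := by
  intro x y
  obtain ⟨hfx0, hfx1⟩ := hf x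
  obtain ⟨hfy0, hfy1⟩ := hf y
  obtain ⟨hgx0, hgx1⟩ := hg x
  obtain ⟨hgy0, hgy1⟩ := hg y
  rw [← real_inner_self_eq_norm_sq, ← real_inner_self_eq_norm_sq]
  simp only [PiLp.inner_apply, Fin.sum_univ_two, RCLike.inner_apply, conj_trivial,
    PiLp.sub_apply, hfx0, hfx1, hfy0, hfy1, hgx0, hgx1, hgy0, hgy1]
  nlinarith [sq_nonneg (x 0 - y 0), sq_nonneg (x 1 - y 1),
    sq_nonneg (x 0 + y 0), sq_nonneg (x 1 + y 1),
    sq_nonneg ((x 0 - y 0) * (x 0 + y 0)), sq_nonneg ((x 1 - y 1) * (x 1 + y 1)),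
    mul_self_nonneg ((x 0 - y 0) * (x 0 + y 0)), sq_nonneg (x 0 * y 0), sq_nonneg (x 1 * y 1)]
end
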